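/- arXiv:2009.00323 — 9 statements merged into one kernel-verified Lean document; each statement's English description precedes it below -/
import Mathlib

section
/- Let T be an L-theory and φ an L-sentence with T ⊬ φ. Suppose ξ is an L-sentence and Q : L.Sentence → L.Sentence is a function such that (i) T ⊢ ξ ↔ (φ ↔ ¬ Q φ) (a diagonal sentence for φ with respect to the provability predicate of T + ξ), and (ii) for every sentence ψ, if T ∪ {ξ} ⊢ ψ then T ⊢ Q ψ. Then U := T ∪ {ξ} is satisfiable and U ⊢ φ ↔ ¬ Q φ; that is, every sentence unprovable in T is a Gödelian sentence of some consistent extension of T. (Proposition 2.2, implication (1)⇒(2).) -/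
open FirstOrder Language

/-- Proposition 2.2, (1)⇒(2): every sentence unprovable in T is a Gödelian sentence of
some consistent extension U = T + ξ of T. -/
theorem unprovable_is_godelian_of_consistent_extension {L : Language} (T : L.Theory)
    (φ : L.Sentence) (hφ : ¬ (T ⊨ᵇ φ))
    (ξ : L.Sentence) (Q : L.Sentence → L.Sentence)
    (h1 : T ⊨ᵇ (ξ ⇔ (φ ⇔ ∼(Q φ))))
    (h2 : ∀ ψ : L.Sentence, ((T ∪ {ξ}) ⊨ᵇ ψ) → (T ⊨ᵇ Q ψ)) :
    (T ∪ {ξ}).IsSatisfiable ∧ ((T ∪ {ξ}) ⊨ᵇ (φ ⇔ ∼(Q φ))) := by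
  have hsat : (T ∪ {ξ}).IsSatisfiable := by
    by_contra hU
    apply hφ
    have hvac : ∀ ψ : L.Sentence, (T ∪ {ξ}) ⊨ᵇ ψ := fun ψ M => absurd ⟨M⟩ hU
    have hQ : T ⊨ᵇ Q φ := h2 φ (hvac φ)
    rw [Theory.models_sentence_iff] at hQ h1 ⊢
    intro M
    have hξ : ¬ (M ⊨ ξ) := by
      intro hξ
      apply hU
      haveI : M ⊨ T ∪ {ξ} := Theory.model_union_iff.2 ⟨M.is_model,
        Theory.model_singleton_iff.2 hξ⟩
      exact ⟨Theory.ModelType.of _ M⟩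
    have h1' := h1 M
    have hQ' := hQ M
    simp only [Sentence.Realize, Formula.realize_iff, Formula.realize_not] at h1' hQ' hξ ⊢
    by_contra hφ'
    exact hξ (h1'.2 (iff_of_false hφ' (not_not_intro hQ')))
  refine ⟨hsat, ?_⟩
  rw [Theory.models_sentence_iff]
  intro M
  have hMT : M ⊨ T := (Theory.model_union_iff.1 M.is_model).1
  have hMξ : M ⊨ ξ := by
    have := (Theory.model_union_iff.1 M.is_model).2
    exact this.realize_of_mem ξ rfl
  have h1' := h1.realize_sentence M
  simp only [Sentence.Realize, Formula.realize_iff] at h1' hMξ ⊢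
  exact h1'.1 hMξ
end

section
/- Let T be an L-theory and P : L.Sentence → L.Sentence satisfy the basic property (for every sentence ψ, T ⊢ ψ implies T ⊢ P ψ) and Löb's Rule: for every sentence ψ, if T ⊢ (P ψ → ψ) then T ⊢ ψ. Let φ be a sentence such that T ∪ {φ ↔ ¬ P φ} is unsatisfiable. Then φ is not a Gödelian sentence of any consistent extension of T: for every L-theory U ⊇ T and every function Q : L.Sentence → L.Sentence satisfying (for every ψ, U ⊢ ψ implies U ⊢ Q ψ), if U ⊢ φ ↔ ¬ Q φ then U is unsatisfiable. (Proposition 2.2, implication (2)⇒(3), in contrapositive form.) -/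
open FirstOrder Language

/-- Proposition 2.2, (2)⇒(3) in contrapositive: under Löb's Rule, if T + [φ ↔ ¬Pφ] is
inconsistent then φ is not a Gödelian sentence of any consistent extension of T. -/
theorem not_godelian_of_any_consistent_extension {L : Language} (T : L.Theory)
    (P : L.Sentence → L.Sentence)
    (hP : ∀ ψ : L.Sentence, T ⊨ᵇ ψ → T ⊨ᵇ P ψ)
    (hLob : ∀ ψ : L.Sentence, (T ⊨ᵇ (P ψ ⟹ ψ)) → T ⊨ᵇ ψ)
    (φ : L.Sentence)
    (hφ : ¬ (T ∪ {φ ⇔ ∼(P φ)}).IsSatisfiable) :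
    ∀ U : L.Theory, T ⊆ U → ∀ Q : L.Sentence → L.Sentence,
      (∀ ψ : L.Sentence, U ⊨ᵇ ψ → U ⊨ᵇ Q ψ) →
      (U ⊨ᵇ (φ ⇔ ∼(Q φ))) → ¬ U.IsSatisfiable := by
  intro U hTU Q hQ hGod hSat
  -- Step 1: T ⊨ φ via Löb's rule
  have hTφ : T ⊨ᵇ φ := by
    apply hLob
    rw [Theory.models_sentence_iff]
    intro M
    have hM : ¬ (M : Type _) ⊨ (φ ⇔ ∼(P φ)) := by
      intro h
      apply hφ
      haveI : (M : Type _) ⊨ (T ∪ {φ ⇔ ∼(P φ)}) := by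
        constructor
        intro ψ hψ
        rcases (Set.mem_union _ _ _).1 hψ with h' | h'
        · exact M.is_model.realize_of_mem _ h'
        · rw [Set.mem_singleton_iff] at h'; subst h'; exact h
      exact ⟨Theory.ModelType.of _ M⟩
    have hM' : ¬ (((M : Type _) ⊨ φ) ↔ ¬ (M : Type _) ⊨ P φ) := by
      intro h; exact hM (by simpa [Sentence.Realize] using h)
    have goal : ((M : Type _) ⊨ P φ) → (M : Type _) ⊨ φ := by
      by_cases h1 : (M : Type _) ⊨ φ
      · exact fun _ => h1
      · intro h2; exact absurd (iff_of_false h1 (not_not_intro h2)) hM'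
    simpa [Sentence.Realize] using goal
  -- Step 2: transfer to U
  have hUφ : U ⊨ᵇ φ := by
    rw [Theory.models_sentence_iff] at hTφ ⊢
    intro M
    haveI : (M : Type _) ⊨ T := M.is_model.mono hTU
    exact hTφ (Theory.ModelType.of _ M)
  have hUQφ := hQ φ hUφ
  -- Step 3: contradiction in a model of U
  obtain ⟨M⟩ := hSat
  have h1 : (M : Type _) ⊨ φ := hUφ.realize_sentence M
  have h2 : (M : Type _) ⊨ Q φ := hUQφ.realize_sentence M
  have h3 := hGod.realize_sentence M
  have h3' : ((M : Type _) ⊨ φ) ↔ ¬ (M : Type _) ⊨ Q φ := by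
    simpa [Sentence.Realize] using h3
  exact (h3'.1 h1) h2
end

section
/- Let T be an L-theory, M an L-structure, Con an L-sentence, and P : L.Sentence → L.Sentence. Assume condition (I): for every sentence φ, T ⊢ (¬Con → P φ). Assume moreover T ⊢ ¬Con. Let Π be a set of L-sentences such that for every π ∈ Π, if M ⊭ π then T ⊢ ¬π. Then: (a) every π ∈ Π that is false in M is a Gödelian sentence of T, i.e. T ⊢ π ↔ ¬ P π; and (b) for every Gödelian sentence γ of T we have T ⊢ ¬γ, so no Gödelian sentence of T is independent from T. (Theorem 2.3, first half.) -/
open FirstOrder Language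

/-- Theorem 2.3, first half: if T ⊢ ¬Con_T (and condition (I) holds), then every false
Π₁-sentence is a Gödelian sentence of T, and every Gödelian sentence of T is refutable
in T, so no Gödelian sentence of T is independent from T. -/
theorem godelian_of_false_pi1_and_refutable {L : Language} (T : L.Theory)
    (M : Type*) [L.Structure M] (Con : L.Sentence) (P : L.Sentence → L.Sentence)
    (hI : ∀ φ : L.Sentence, T ⊨ᵇ ((∼Con) ⟹ P φ))
    (hCon : T ⊨ᵇ (∼Con))
    (Pi1 : Set L.Sentence)
    (hPi1 : ∀ π ∈ Pi1, ¬ (M ⊨ π) → T ⊨ᵇ (∼π)) :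
    (∀ π ∈ Pi1, ¬ (M ⊨ π) → T ⊨ᵇ (π ⇔ ∼(P π))) ∧
    (∀ γ : L.Sentence, (T ⊨ᵇ (γ ⇔ ∼(P γ))) → T ⊨ᵇ (∼γ)) := by
  have hP : ∀ φ : L.Sentence, T ⊨ᵇ (P φ) := by
    intro φ N v xs
    have h1 := hI φ N v xs
    have h2 := hCon N v xs
    simp only [BoundedFormula.realize_imp] at h1
    exact h1 h2
  constructor
  · intro π hπ hMπ N v xs
    have hnπ := hPi1 π hπ hMπ N v xs
    have hp := hP π N v xs
    simp only [BoundedFormula.realize_iff, BoundedFormula.realize_not] at *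
    tauto
  · intro γ hγ N v xs
    have h := hγ N v xs
    have hp := hP γ N v xs
    simp only [BoundedFormula.realize_iff, BoundedFormula.realize_not] at *
    tauto
end

section
/- Let T be an L-theory, M an L-structure, Con an L-sentence, and P : L.Sentence → L.Sentence satisfying the basic property (for every ψ, T ⊢ ψ implies T ⊢ P ψ). Assume condition (II): for every Gödelian sentence γ of T (i.e. every γ with T ⊢ γ ↔ ¬ P γ), T ⊢ (Con → ¬ P γ). Assume moreover T ⊬ ¬Con. Let Π be a set of L-sentences such that for every π ∈ Π, if M ⊭ π then T ⊢ ¬π. Then every Gödelian sentence γ of T is independent from T (T ⊬ γ and T ⊬ ¬γ), and every Gödelian sentence of T belonging to Π is true in M. (Theorem 2.3, second half.) -/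
open FirstOrder Language

/-- Theorem 2.3, second half: if T ⊬ ¬Con_T (and condition (II) holds), then every
Gödelian sentence of T is independent from T, and every Gödelian Π₁-sentence of T is
true. -/
theorem godelian_independent_and_pi1_true {L : Language} (T : L.Theory)
    (M : Type*) [L.Structure M] (Con : L.Sentence) (P : L.Sentence → L.Sentence)
    (hP : ∀ ψ : L.Sentence, T ⊨ᵇ ψ → T ⊨ᵇ P ψ)
    (hII : ∀ γ : L.Sentence, (T ⊨ᵇ (γ ⇔ ∼(P γ))) → T ⊨ᵇ (Con ⟹ ∼(P γ)))
    (hCon : ¬ (T ⊨ᵇ (∼Con)))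
    (Pi1 : Set L.Sentence)
    (hPi1 : ∀ π ∈ Pi1, ¬ (M ⊨ π) → T ⊨ᵇ (∼π)) :
    (∀ γ : L.Sentence, (T ⊨ᵇ (γ ⇔ ∼(P γ))) → ¬ (T ⊨ᵇ γ) ∧ ¬ (T ⊨ᵇ (∼γ))) ∧
    (∀ γ ∈ Pi1, (T ⊨ᵇ (γ ⇔ ∼(P γ))) → M ⊨ γ) := by
  obtain ⟨N, hN⟩ : ∃ N : T.ModelType, ¬ N ⊨ (∼Con : L.Sentence) := by
    by_contra h
    push_neg at h
    exact hCon (Theory.models_sentence_iff.2 h)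
  have hNCon : N ⊨ Con := by
    simpa [Sentence.Realize] using hN
  have indep : ∀ γ : L.Sentence, (T ⊨ᵇ (γ ⇔ ∼(P γ))) → ¬ (T ⊨ᵇ γ) ∧ ¬ (T ⊨ᵇ (∼γ)) := by
    intro γ hγ
    have hiffN : N ⊨ (γ ⇔ ∼(P γ)) := Theory.models_sentence_iff.1 hγ N
    have hiffN' : (N ⊨ γ) ↔ ¬ N ⊨ P γ := by
      simpa [Sentence.Realize] using hiffN
    constructor
    · intro h
      have h1 : N ⊨ P γ := Theory.models_sentence_iff.1 (hP γ h) N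
      have h2 : N ⊨ γ := Theory.models_sentence_iff.1 h N
      exact (hiffN'.1 h2) h1
    · intro h
      have hnγ : ¬ N ⊨ γ := by
        simpa [Sentence.Realize] using Theory.models_sentence_iff.1 h N
      have hPγ : N ⊨ P γ := by
        by_contra hp
        exact hnγ (hiffN'.2 hp)
      have himp : N ⊨ (Con ⟹ ∼(P γ)) := Theory.models_sentence_iff.1 (hII γ hγ) N
      have : ¬ N ⊨ P γ := by
        simpa [Sentence.Realize] using (by simpa [Sentence.Realize] using himp : N ⊨ Con → ¬ N ⊨ P γ) hNCon
      exact this hPγ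
  refine ⟨indep, fun γ hγPi hγ => ?_⟩
  by_contra hM
  exact (indep γ hγ).2 (hPi1 γ hγPi hM)
end

section
/- Let T be a satisfiable L-theory, M an L-structure, and P : L.Sentence → L.Sentence satisfying the basic property (for every ψ, T ⊢ ψ implies T ⊢ P ψ). Let Σ be a set of L-sentences such that for every σ ∈ Σ, if M ⊨ σ then T ⊢ σ. Then no Gödelian sentence of T belonging to Σ is true in M: for every γ ∈ Σ with T ⊢ γ ↔ ¬ P γ, we have M ⊭ γ. (Proposition 2.4: no Gödelian Σ1-sentence of a consistent theory is true.) -/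
open FirstOrder Language

/-- Proposition 2.4: no Gödelian Σ₁-sentence of a consistent theory is true. -/
theorem godelian_sigma1_not_true {L : Language} (T : L.Theory)
    (hT : T.IsSatisfiable) (M : Type*) [L.Structure M]
    (P : L.Sentence → L.Sentence)
    (hP : ∀ ψ : L.Sentence, T ⊨ᵇ ψ → T ⊨ᵇ P ψ)
    (Sig1 : Set L.Sentence)
    (hSig1 : ∀ σ ∈ Sig1, (M ⊨ σ) → T ⊨ᵇ σ) :
    ∀ γ ∈ Sig1, (T ⊨ᵇ (γ ⇔ ∼(P γ))) → ¬ (M ⊨ γ) := by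
  intro γ hγ hiff hMγ
  have hTγ : T ⊨ᵇ γ := hSig1 γ hγ hMγ
  have hTP : T ⊨ᵇ P γ := hP γ hTγ
  obtain ⟨N⟩ := hT
  let N' : T.ModelType := Theory.ModelType.of T N
  have h1 := hTγ N' Empty.elim finZeroElim
  have h2 := hTP N' Empty.elim finZeroElim
  have h3 := hiff N' Empty.elim finZeroElim
  rw [BoundedFormula.realize_iff, BoundedFormula.realize_not] at h3
  exact (h3.mp h1) h2
end

section
/- Let T be an L-theory, M an L-structure, and Γ a set of L-sentences closed under disjunction (if σ, σ' ∈ Γ then σ ⊔ σ' ∈ Γ). If T is Γ-sound, i.e. every σ ∈ Γ with T ⊢ σ satisfies M ⊨ σ, then for every L-sentence φ, either T ∪ {φ} is Γ-sound or T ∪ {¬φ} is Γ-sound. (Lemma 2.6: on extensions of Γ-sound theories.) -/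
open FirstOrder Language

/-- Lemma 2.6: if Γ is closed under disjunction and T is Γ-sound, then for every
sentence φ, either T + φ or T + ¬φ is Γ-sound. -/
theorem gamma_sound_extension {L : Language} (T : L.Theory)
    (M : Type*) [L.Structure M] (Γ : Set L.Sentence)
    (hΓ : ∀ σ ∈ Γ, ∀ σ' ∈ Γ, σ ⊔ σ' ∈ Γ)
    (hsound : ∀ σ ∈ Γ, (T ⊨ᵇ σ) → M ⊨ σ) :
    ∀ φ : L.Sentence,
      (∀ σ ∈ Γ, ((T ∪ {φ}) ⊨ᵇ σ) → M ⊨ σ) ∨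
      (∀ σ ∈ Γ, ((T ∪ {∼φ}) ⊨ᵇ σ) → M ⊨ σ) := by
  intro φ
  by_contra h
  push_neg at h
  obtain ⟨⟨σ, hσΓ, hσ, hσM⟩, ⟨σ', hσ'Γ, hσ', hσ'M⟩⟩ := h
  have hsup : T ⊨ᵇ (σ ⊔ σ') := by
    rw [Theory.models_sentence_iff]
    intro N
    by_cases hφ : (N : Type _) ⊨ φ
    · have : (N : Type _) ⊨ T ∪ {φ} := by
        rw [Theory.model_union_iff]
        exact ⟨inferInstance, Theory.model_singleton_iff.2 hφ⟩
      simp only [Sentence.Realize, Formula.realize_sup]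
      exact Or.inl (hσ.realize_sentence N)
    · have : (N : Type _) ⊨ T ∪ {∼φ} := by
        rw [Theory.model_union_iff]
        refine ⟨inferInstance, Theory.model_singleton_iff.2 ?_⟩
        rwa [Sentence.realize_not]
      simp only [Sentence.Realize, Formula.realize_sup]
      exact Or.inr (hσ'.realize_sentence N)
  have := hsound _ (hΓ σ hσΓ σ' hσ'Γ) hsup
  simp only [Sentence.Realize, Formula.realize_sup] at this
  rcases this with h1 | h1
  · exact hσM h1
  · exact hσ'M h1
end

section
/- Let U be an L-theory and P : L.Sentence → L.Sentence a function such that U ⊢ P ζ for every L-sentence ζ. Let B be the smallest set of L-sentences containing P χ for every sentence χ and closed under negation, conjunction, disjunction, and implication. Then every β ∈ B is decided by U (U ⊢ β or U ⊢ ¬β); consequently, every pseudo-Gödelian sentence ψ of U — i.e. every ψ with U ⊢ ψ ↔ β for some β ∈ B — satisfies U ⊢ ψ or U ⊢ ¬ψ, so no pseudo-Gödelian sentence of U is independent from U. (Proposition 3.3, applied in the paper with U = T + ¬Con_T, for which U ⊢ Pr_U(#ζ) holds for all ζ.) -/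
open FirstOrder Language

/-- The smallest set of sentences containing all P χ and closed under the Boolean
connectives (negation, conjunction, disjunction, implication). -/
inductive IsBoolCombOfPr {L : Language} (P : L.Sentence → L.Sentence) :
    L.Sentence → Prop
  | base (χ : L.Sentence) : IsBoolCombOfPr P (P χ)
  | not {β : L.Sentence} : IsBoolCombOfPr P β → IsBoolCombOfPr P (∼β)
  | and {β γ : L.Sentence} :
      IsBoolCombOfPr P β → IsBoolCombOfPr P γ → IsBoolCombOfPr P (β ⊓ γ)
  | or {β γ : L.Sentence} :
      IsBoolCombOfPr P β → IsBoolCombOfPr P γ → IsBoolCombOfPr P (β ⊔ γ)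
  | imp {β γ : L.Sentence} :
      IsBoolCombOfPr P β → IsBoolCombOfPr P γ → IsBoolCombOfPr P (β ⟹ γ)

/-- Proposition 3.3: if U proves P ζ for every ζ, then U decides every Boolean
combination of sentences P χ, and hence every pseudo-Gödelian sentence of U is
decided by U (so none is independent from U). -/
theorem pseudo_godelian_decidable {L : Language} (U : L.Theory)
    (P : L.Sentence → L.Sentence)
    (hP : ∀ ζ : L.Sentence, U ⊨ᵇ P ζ) :
    (∀ β : L.Sentence, IsBoolCombOfPr P β → ((U ⊨ᵇ β) ∨ (U ⊨ᵇ (∼β)))) ∧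
    (∀ ψ : L.Sentence, (∃ β : L.Sentence, IsBoolCombOfPr P β ∧ (U ⊨ᵇ (ψ ⇔ β))) →
      ((U ⊨ᵇ ψ) ∨ (U ⊨ᵇ (∼ψ)))) := by
  classical
  have main : ∀ β : L.Sentence, IsBoolCombOfPr P β → ((U ⊨ᵇ β) ∨ (U ⊨ᵇ (∼β))) := by
    intro β hβ
    induction hβ with
    | base χ => exact Or.inl (hP χ)
    | not hβ ih =>
      rcases ih with h | h
      · refine Or.inr (Theory.models_sentence_iff.2 fun M => ?_)
        have a := Theory.models_sentence_iff.1 h M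
        simp only [Sentence.Realize, Formula.Realize, BoundedFormula.realize_not] at a ⊢
        tauto
      · exact Or.inl h
    | and hβ hγ ihβ ihγ =>
      rcases ihβ with h1 | h1
      · rcases ihγ with h2 | h2
        · refine Or.inl (Theory.models_sentence_iff.2 fun M => ?_)
          have a := Theory.models_sentence_iff.1 h1 M
          have b := Theory.models_sentence_iff.1 h2 M
          simp only [Sentence.Realize, Formula.Realize, BoundedFormula.realize_inf,
            BoundedFormula.realize_not] at a b ⊢
          tauto
        · refine Or.inr (Theory.models_sentence_iff.2 fun M => ?_)
          have b := Theory.models_sentence_iff.1 h2 M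
          simp only [Sentence.Realize, Formula.Realize, BoundedFormula.realize_inf,
            BoundedFormula.realize_not] at b ⊢
          tauto
      · refine Or.inr (Theory.models_sentence_iff.2 fun M => ?_)
        have a := Theory.models_sentence_iff.1 h1 M
        simp only [Sentence.Realize, Formula.Realize, BoundedFormula.realize_inf,
          BoundedFormula.realize_not] at a ⊢
        tauto
    | or hβ hγ ihβ ihγ =>
      rcases ihβ with h1 | h1
      · refine Or.inl (Theory.models_sentence_iff.2 fun M => ?_)
        have a := Theory.models_sentence_iff.1 h1 M
        simp only [Sentence.Realize, Formula.Realize, BoundedFormula.realize_sup] at a ⊢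
        tauto
      · rcases ihγ with h2 | h2
        · refine Or.inl (Theory.models_sentence_iff.2 fun M => ?_)
          have b := Theory.models_sentence_iff.1 h2 M
          simp only [Sentence.Realize, Formula.Realize, BoundedFormula.realize_sup] at b ⊢
          tauto
        · refine Or.inr (Theory.models_sentence_iff.2 fun M => ?_)
          have a := Theory.models_sentence_iff.1 h1 M
          have b := Theory.models_sentence_iff.1 h2 M
          simp only [Sentence.Realize, Formula.Realize, BoundedFormula.realize_sup,
            BoundedFormula.realize_not] at a b ⊢
          tauto
    | imp hβ hγ ihβ ihγ =>
      rcases ihγ with h2 | h2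
      · refine Or.inl (Theory.models_sentence_iff.2 fun M => ?_)
        have b := Theory.models_sentence_iff.1 h2 M
        simp only [Sentence.Realize, Formula.Realize, BoundedFormula.realize_imp] at b ⊢
        tauto
      · rcases ihβ with h1 | h1
        · refine Or.inr (Theory.models_sentence_iff.2 fun M => ?_)
          have a := Theory.models_sentence_iff.1 h1 M
          have b := Theory.models_sentence_iff.1 h2 M
          simp only [Sentence.Realize, Formula.Realize, BoundedFormula.realize_imp,
            BoundedFormula.realize_not] at a b ⊢
          tauto
        · refine Or.inl (Theory.models_sentence_iff.2 fun M => ?_)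
          have a := Theory.models_sentence_iff.1 h1 M
          simp only [Sentence.Realize, Formula.Realize, BoundedFormula.realize_imp,
            BoundedFormula.realize_not] at a ⊢
          tauto
  refine ⟨main, ?_⟩
  rintro ψ ⟨β, hβ, hiff⟩
  rcases main β hβ with h | h
  · refine Or.inl (Theory.models_sentence_iff.2 fun M => ?_)
    have e := Theory.models_sentence_iff.1 hiff M
    have b := Theory.models_sentence_iff.1 h M
    simp only [Sentence.Realize, Formula.Realize, BoundedFormula.realize_iff] at e b ⊢
    tauto
  · refine Or.inr (Theory.models_sentence_iff.2 fun M => ?_)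
    have e := Theory.models_sentence_iff.1 hiff M
    have b := Theory.models_sentence_iff.1 h M
    simp only [Sentence.Realize, Formula.Realize, BoundedFormula.realize_iff,
      BoundedFormula.realize_not] at e b ⊢
    tauto
end

section
/- Let T be a satisfiable L-theory, M an L-structure, and R : L.Sentence → L.Sentence satisfying: (i) for every ψ, T ⊢ ψ implies T ⊢ R ψ, and (ii) for every ψ, T ⊢ ¬ψ implies T ⊢ ¬ R ψ. Let Π be a set of L-sentences such that for every π ∈ Π, if M ⊭ π then T ⊢ ¬π. Then every Rosserian sentence of T belonging to Π is true in M: if ρ ∈ Π and T ⊢ ρ ↔ ¬ R ρ, then M ⊨ ρ. (Theorem 3.6, first half: every Rosserian Π1-sentence of a consistent theory is true.) -/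
open FirstOrder Language

/-- Theorem 3.6, first half: every Rosserian Π₁-sentence of a consistent theory is
true. -/
theorem rosserian_pi1_true {L : Language} (T : L.Theory)
    (hT : T.IsSatisfiable) (M : Type*) [L.Structure M]
    (R : L.Sentence → L.Sentence)
    (h1 : ∀ ψ : L.Sentence, T ⊨ᵇ ψ → T ⊨ᵇ R ψ)
    (h2 : ∀ ψ : L.Sentence, (T ⊨ᵇ (∼ψ)) → T ⊨ᵇ (∼(R ψ)))
    (Pi1 : Set L.Sentence)
    (hPi1 : ∀ π ∈ Pi1, ¬ (M ⊨ π) → T ⊨ᵇ (∼π)) :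
    ∀ ρ ∈ Pi1, (T ⊨ᵇ (ρ ⇔ ∼(R ρ))) → M ⊨ ρ := by
  intro ρ hρmem hiff
  by_contra hρ
  have hn : T ⊨ᵇ (∼ρ) := hPi1 ρ hρmem hρ
  have hR : T ⊨ᵇ R ρ := by
    intro N v xs
    have h1 := hiff N v xs
    have h2 := hn N v xs
    simp only [FirstOrder.Language.BoundedFormula.realize_iff,
      FirstOrder.Language.BoundedFormula.realize_not] at *
    tauto
  have hnR : T ⊨ᵇ (∼(R ρ)) := h2 ρ hn
  obtain ⟨N⟩ := hT
  have := hR N default default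
  have := hnR N default default
  simp only [FirstOrder.Language.BoundedFormula.realize_not] at *
  exact this ‹_›
end

section
/- Let T be a satisfiable L-theory, M an L-structure, and R : L.Sentence → L.Sentence satisfying: for every ψ, T ⊢ ψ implies T ⊢ R ψ. Let Σ be a set of L-sentences such that for every σ ∈ Σ, if M ⊨ σ then T ⊢ σ. Then every Rosserian sentence of T belonging to Σ is false in M: if ρ ∈ Σ and T ⊢ ρ ↔ ¬ R ρ, then M ⊭ ρ. (Theorem 3.6, second half: every Rosserian Σ1-sentence of a consistent theory is false.) -/
open FirstOrder Language

/-- Theorem 3.6, second half: every Rosserian Σ₁-sentence of a consistent theory is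
false. -/
theorem rosserian_sigma1_false {L : Language} (T : L.Theory)
    (hT : T.IsSatisfiable) (M : Type*) [L.Structure M]
    (R : L.Sentence → L.Sentence)
    (h1 : ∀ ψ : L.Sentence, T ⊨ᵇ ψ → T ⊨ᵇ R ψ)
    (Sig1 : Set L.Sentence)
    (hSig1 : ∀ σ ∈ Sig1, (M ⊨ σ) → T ⊨ᵇ σ) :
    ∀ ρ ∈ Sig1, (T ⊨ᵇ (ρ ⇔ ∼(R ρ))) → ¬ (M ⊨ ρ) := by
  intro ρ hρ hiff hM
  have hTρ : T ⊨ᵇ ρ := hSig1 ρ hρ hM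
  have hTR : T ⊨ᵇ R ρ := h1 ρ hTρ
  obtain ⟨N⟩ := hT
  have h1' := hTρ.realize_sentence N
  have h2' := hTR.realize_sentence N
  have h3' := hiff.realize_sentence N
  simp only [Sentence.Realize, Formula.Realize, BoundedFormula.realize_iff, BoundedFormula.realize_not] at h1' h2' h3'
  exact (h3'.mp h1') h2'
end
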